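/- Let λ ≥ 0, let v ∈ ℝ^d be a unit vector, set Σ = I_d + λ v vᵀ, and let x ~ N(0, Σ). Let f : ℝ → ℝ be three times differentiable with |f'| ≤ M₁, |f''| ≤ M₂, |f'''| ≤ M₃ on ℝ, and define H(z, z⋆) := f'(z)² + (f(z) − f(z⋆))·f''(z). Then for all unit vectors h, w, v⋆ ∈ ℝ^d: | E[ H(⟨w,x⟩, ⟨v⋆,x⟩)·⟨h,x⟩² ] − E[ f'(⟨v⋆,x⟩)²·⟨h,x⟩² ] | ≤ 3√3·M₁·M₂·(1+λ)^{3/2}·‖w − v⋆‖ + (3/2)·M₁·M₃·(1+λ)²·‖w − v⋆‖². -/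

import Mathlib

open MeasureTheory ProbabilityTheory Matrix

/-- `X` is a centered Gaussian random vector with covariance matrix `S`:
by the Cramér–Wold device, this holds iff every linear functional `⟨u, X⟩` has the
one-dimensional centered Gaussian law with variance `uᵀ S u`. -/
def IsCenteredGaussianVec {Ω : Type*} [MeasurableSpace Ω] (P : Measure Ω) {d : ℕ}
    (S : Matrix (Fin d) (Fin d) ℝ) (X : Ω → Fin d → ℝ) : Prop :=
  Measurable X ∧
    ∀ u : Fin d → ℝ, Measure.map (fun ω => u ⬝ᵥ X ω) P =
      gaussianReal 0 (Real.toNNReal (u ⬝ᵥ S.mulVec u))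

/-!
Write `a = ⟨w, x⟩`, `b = ⟨v⋆, x⟩` and `u = w - v⋆`. By the mean value theorem,
`|f'(a)² + (f(a) - f(b)) f''(a) - f'(b)²| ≤ |f'(a) - f'(b)| |f'(a) + f'(b)| + |f(a) - f(b)| M₂
≤ 3 M₁ M₂ |⟨u, x⟩|`, so the deviation is at most `3 M₁ M₂ E[|⟨u, x⟩| ⟨h, x⟩²]`. Cauchy–Schwarz and
the Gaussian moments `E⟨u, x⟩² = uᵀΣu`, `E⟨h, x⟩⁴ = 3 (hᵀΣh)²` bound this expectation by
`√3 (uᵀΣu)^{1/2} hᵀΣh`, and `uᵀΣu ≤ (1 + λ) ‖u‖²` for the spiked covariance. This gives the linear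
term of the bound; the quadratic one is nonnegative.
-/

section GaussianMoments

open Real

theorem integrable_pow_mul_exp_neg_mul_sq {b : ℝ} (hb : 0 < b) (k : ℕ) :
    Integrable fun x : ℝ => x ^ k * exp (-b * x ^ 2) := by
  simpa only [rpow_natCast] using
    integrable_rpow_mul_exp_neg_mul_sq hb (s := k) (by linarith [k.cast_nonneg (α := ℝ)])

theorem integral_pow_add_two_mul_exp_neg_mul_sq {b : ℝ} (hb : 0 < b) (k : ℕ) :
    ∫ x : ℝ, x ^ (k + 2) * exp (-b * x ^ 2) =
      (k + 1) / (2 * b) * ∫ x : ℝ, x ^ k * exp (-b * x ^ 2) := by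
  have hu : ∀ x : ℝ, HasDerivAt (fun y => y ^ (k + 1)) ((k + 1) * x ^ k) x := fun x => by
    simpa using hasDerivAt_pow (k + 1) x
  have hv : ∀ x : ℝ, HasDerivAt (fun y => -(2 * b)⁻¹ * exp (-b * y ^ 2))
      (x * exp (-b * x ^ 2)) x := fun x => by
    refine (((hasDerivAt_pow 2 x).const_mul (-b)).exp.const_mul (-(2 * b)⁻¹)).congr_deriv ?_
    field_simp
    norm_num
  have hint := integrable_pow_mul_exp_neg_mul_sq hb
  have hparts := integral_mul_deriv_eq_deriv_mul_of_integrable (fun x _ => hu x) (fun x _ => hv x)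
    ((hint (k + 2)).congr (ae_of_all _ fun x => by simp only [Pi.mul_apply]; ring))
    (((hint k).const_mul ((k + 1) * -(2 * b)⁻¹)).congr (ae_of_all _ fun x => by
      simp only [Pi.mul_apply]; ring))
    (((hint (k + 1)).const_mul (-(2 * b)⁻¹)).congr (ae_of_all _ fun x => by
      simp only [Pi.mul_apply]; ring))
  calc ∫ x : ℝ, x ^ (k + 2) * exp (-b * x ^ 2)
      = ∫ x : ℝ, x ^ (k + 1) * (x * exp (-b * x ^ 2)) := by congr 1; ext x; ring
    _ = -∫ x : ℝ, ((k + 1) * -(2 * b)⁻¹) * (x ^ k * exp (-b * x ^ 2)) := by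
        rw [hparts]; congr 1; congr 1; ext x; ring
    _ = (k + 1) / (2 * b) * ∫ x : ℝ, x ^ k * exp (-b * x ^ 2) := by
        rw [integral_const_mul]; ring

theorem integral_pow_add_two_gaussianReal (V : NNReal) (k : ℕ) :
    ∫ x, x ^ (k + 2) ∂gaussianReal 0 V = (k + 1) * V * ∫ x, x ^ k ∂gaussianReal 0 V := by
  rcases eq_or_ne V 0 with rfl | hV
  · simp [gaussianReal_zero_var]
  have hpdf : ∀ (m : ℕ) (x : ℝ), gaussianPDFReal 0 V x • x ^ m =
      (√(2 * π * V))⁻¹ * (x ^ m * exp (-(2 * V : ℝ)⁻¹ * x ^ 2)) := by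
    intro m x
    simp only [gaussianPDFReal, smul_eq_mul, sub_zero, div_eq_inv_mul, neg_mul]
    ring_nf
  simp only [integral_gaussianReal_eq_integral_smul hV, hpdf, integral_const_mul,
    integral_pow_add_two_mul_exp_neg_mul_sq (inv_pos.2 (by positivity : (0:ℝ) < 2 * V))]
  field_simp

theorem integral_sq_gaussianReal (V : NNReal) : ∫ x, x ^ 2 ∂gaussianReal 0 V = V := by
  simpa using integral_pow_add_two_gaussianReal V 0

theorem integral_pow_four_gaussianReal (V : NNReal) :
    ∫ x, x ^ 4 ∂gaussianReal 0 V = 3 * (V : ℝ) ^ 2 := by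
  rw [integral_pow_add_two_gaussianReal V 2, integral_sq_gaussianReal]
  push_cast
  ring

theorem integrable_pow_gaussianReal (V : NNReal) (k : ℕ) :
    Integrable (fun x : ℝ => x ^ k) (gaussianReal 0 V) :=
  (memLp_id_gaussianReal k).integrable_norm_pow'.mono' (by fun_prop)
    (ae_of_all _ fun x => by simp [norm_pow])

end GaussianMoments

theorem integral_mul_le_sqrt_integral_sq_mul_sqrt_integral_sq {α : Type*} [MeasurableSpace α]
    {μ : Measure α} {f g : α → ℝ} (hf₀ : 0 ≤ᵐ[μ] f) (hg₀ : 0 ≤ᵐ[μ] g)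
    (hf : MemLp f 2 μ) (hg : MemLp g 2 μ) :
    ∫ a, f a * g a ∂μ ≤ √(∫ a, f a ^ 2 ∂μ) * √(∫ a, g a ^ 2 ∂μ) := by
  have := integral_mul_le_Lp_mul_Lq_of_nonneg Real.HolderConjugate.two_two hf₀ hg₀
    (by simpa using hf) (by simpa using hg)
  simpa only [Real.rpow_two, ← Real.sqrt_eq_rpow] using this

theorem abs_sub_le_of_abs_deriv_le {g : ℝ → ℝ} {M : ℝ} (hg : Differentiable ℝ g)
    (hM : ∀ x, |deriv g x| ≤ M) (a b : ℝ) : |g a - g b| ≤ M * |a - b| := by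
  simpa only [Real.norm_eq_abs] using Convex.norm_image_sub_le_of_norm_deriv_le
    (fun x _ => hg x) (fun x _ => hM x) convex_univ (Set.mem_univ b) (Set.mem_univ a)

theorem abs_hessian_sub_le {f : ℝ → ℝ} {M₁ M₂ : ℝ} (h1 : Differentiable ℝ f)
    (h2 : Differentiable ℝ (deriv f)) (hM₁ : ∀ x, |deriv f x| ≤ M₁)
    (hM₂ : ∀ x, |deriv (deriv f) x| ≤ M₂) (a b : ℝ) :
    |deriv f a ^ 2 + (f a - f b) * deriv (deriv f) a - deriv f b ^ 2| ≤
      3 * M₁ * M₂ * |a - b| := by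
  have hM₁0 : 0 ≤ M₁ := (abs_nonneg _).trans (hM₁ 0)
  have hf' : |deriv f a ^ 2 - deriv f b ^ 2| ≤ 2 * M₁ * (M₂ * |a - b|) := by
    rw [sq_sub_sq, abs_mul]
    exact mul_le_mul ((abs_add_le _ _).trans (by linarith [hM₁ a, hM₁ b]))
      (abs_sub_le_of_abs_deriv_le h2 hM₂ a b) (abs_nonneg _) (by positivity)
  have hf : |(f a - f b) * deriv (deriv f) a| ≤ M₁ * |a - b| * M₂ := by
    rw [abs_mul]
    exact mul_le_mul (abs_sub_le_of_abs_deriv_le h1 hM₁ a b) (hM₂ a) (abs_nonneg _)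
      (by positivity)
  calc |deriv f a ^ 2 + (f a - f b) * deriv (deriv f) a - deriv f b ^ 2|
      = |(deriv f a ^ 2 - deriv f b ^ 2) + (f a - f b) * deriv (deriv f) a| := by ring_nf
    _ ≤ 3 * M₁ * M₂ * |a - b| := by
        linarith [abs_add_le (deriv f a ^ 2 - deriv f b ^ 2) ((f a - f b) * deriv (deriv f) a)]

theorem dotProduct_spiked_mulVec_le {d : ℕ} {lam : ℝ} (hlam : 0 ≤ lam) (v u : Fin d → ℝ) :
    u ⬝ᵥ (1 + lam • vecMulVec v v) *ᵥ u ≤ (1 + lam * (v ⬝ᵥ v)) * (u ⬝ᵥ u) := by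
  have hCS : (v ⬝ᵥ u) ^ 2 ≤ (v ⬝ᵥ v) * (u ⬝ᵥ u) := by
    simpa only [dotProduct, sq] using Finset.sum_mul_sq_le_sq_mul_sq Finset.univ v u
  have hquad : u ⬝ᵥ (1 + lam • vecMulVec v v) *ᵥ u = u ⬝ᵥ u + lam * (v ⬝ᵥ u) ^ 2 := by
    simp only [add_mulVec, one_mulVec, smul_mulVec, vecMulVec_mulVec, dotProduct_add,
      dotProduct_smul, dotProduct_comm u v]
    simp [sq]
  rw [hquad]
  nlinarith [mul_le_mul_of_nonneg_left hCS hlam]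

theorem abs_integral_sub_le_integral_of_abs_sub_le {α : Type*} [MeasurableSpace α]
    {μ : Measure α} {F G B : α → ℝ} (hF : AEStronglyMeasurable F μ) (hG : Integrable G μ)
    (hB : Integrable B μ) (hFG : ∀ a, |F a - G a| ≤ B a) :
    |∫ a, F a ∂μ - ∫ a, G a ∂μ| ≤ ∫ a, B a ∂μ := by
  have hFG' : Integrable (fun a => F a - G a) μ :=
    hB.mono' (hF.sub hG.1) (ae_of_all _ hFG)
  have hF' : Integrable F μ := (hFG'.add hG).congr (ae_of_all _ fun a => sub_add_cancel (F a) (G a))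
  rw [← integral_sub hF' hG]
  exact (abs_integral_le_integral_abs).trans (integral_mono hFG'.abs hB hFG)

namespace IsCenteredGaussianVec

variable {Ω : Type*} [MeasurableSpace Ω] {P : Measure Ω} {d : ℕ}
  {S : Matrix (Fin d) (Fin d) ℝ} {X : Ω → Fin d → ℝ}

theorem measurable_dotProduct (hX : IsCenteredGaussianVec P S X) (u : Fin d → ℝ) :
    Measurable fun ω => u ⬝ᵥ X ω :=
  (continuous_const.dotProduct continuous_id).measurable.comp hX.1

theorem integrable_pow_dotProduct (hX : IsCenteredGaussianVec P S X) (u : Fin d → ℝ) (k : ℕ) :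
    Integrable (fun ω => (u ⬝ᵥ X ω) ^ k) P := by
  have := integrable_pow_gaussianReal (u ⬝ᵥ S *ᵥ u).toNNReal k
  rw [← hX.2 u] at this
  exact (integrable_map_measure (continuous_pow k).aestronglyMeasurable
    (hX.measurable_dotProduct u).aemeasurable).1 this

theorem integral_pow_dotProduct (hX : IsCenteredGaussianVec P S X) (u : Fin d → ℝ) (k : ℕ) :
    ∫ ω, (u ⬝ᵥ X ω) ^ k ∂P = ∫ x, x ^ k ∂gaussianReal 0 (u ⬝ᵥ S *ᵥ u).toNNReal := by
  rw [← hX.2 u, integral_map (hX.measurable_dotProduct u).aemeasurable (by fun_prop)]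

theorem integral_dotProduct_sq (hX : IsCenteredGaussianVec P S X) (u : Fin d → ℝ) :
    ∫ ω, (u ⬝ᵥ X ω) ^ 2 ∂P = max (u ⬝ᵥ S *ᵥ u) 0 := by
  rw [integral_pow_dotProduct hX, integral_sq_gaussianReal, Real.coe_toNNReal']

theorem integral_dotProduct_pow_four (hX : IsCenteredGaussianVec P S X) (u : Fin d → ℝ) :
    ∫ ω, (u ⬝ᵥ X ω) ^ 4 ∂P = 3 * max (u ⬝ᵥ S *ᵥ u) 0 ^ 2 := by
  rw [integral_pow_dotProduct hX, integral_pow_four_gaussianReal, Real.coe_toNNReal']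

theorem memLp_two_dotProduct (hX : IsCenteredGaussianVec P S X) (u : Fin d → ℝ) :
    MemLp (fun ω => u ⬝ᵥ X ω) 2 P :=
  (memLp_two_iff_integrable_sq (hX.measurable_dotProduct u).aestronglyMeasurable).2
    (hX.integrable_pow_dotProduct u 2)

theorem memLp_two_dotProduct_sq (hX : IsCenteredGaussianVec P S X) (u : Fin d → ℝ) :
    MemLp (fun ω => (u ⬝ᵥ X ω) ^ 2) 2 P :=
  (memLp_two_iff_integrable_sq ((hX.measurable_dotProduct u).pow_const 2).aestronglyMeasurable).2
    (by simpa only [← pow_mul] using hX.integrable_pow_dotProduct u 4)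

theorem integrable_abs_dotProduct_mul_sq (hX : IsCenteredGaussianVec P S X) (u h : Fin d → ℝ) :
    Integrable (fun ω => |u ⬝ᵥ X ω| * (h ⬝ᵥ X ω) ^ 2) P :=
  (hX.memLp_two_dotProduct u).abs.integrable_mul (hX.memLp_two_dotProduct_sq h)

theorem integral_abs_dotProduct_mul_sq_le (hX : IsCenteredGaussianVec P S X) (u h : Fin d → ℝ) :
    ∫ ω, |u ⬝ᵥ X ω| * (h ⬝ᵥ X ω) ^ 2 ∂P ≤
      √3 * √(max (u ⬝ᵥ S *ᵥ u) 0) * max (h ⬝ᵥ S *ᵥ h) 0 := by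
  calc ∫ ω, |u ⬝ᵥ X ω| * (h ⬝ᵥ X ω) ^ 2 ∂P
      ≤ √(∫ ω, |u ⬝ᵥ X ω| ^ 2 ∂P) * √(∫ ω, ((h ⬝ᵥ X ω) ^ 2) ^ 2 ∂P) :=
        integral_mul_le_sqrt_integral_sq_mul_sqrt_integral_sq
          (ae_of_all _ fun _ => abs_nonneg _) (ae_of_all _ fun _ => sq_nonneg _)
          (hX.memLp_two_dotProduct u).abs (hX.memLp_two_dotProduct_sq h)
    _ = √3 * √(max (u ⬝ᵥ S *ᵥ u) 0) * max (h ⬝ᵥ S *ᵥ h) 0 := by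
        simp only [sq_abs, ← pow_mul, hX.integral_dotProduct_sq, hX.integral_dotProduct_pow_four]
        rw [Real.sqrt_mul (by norm_num), Real.sqrt_sq (le_max_right _ _)]
        ring

theorem abs_integral_hessian_sub_le (hX : IsCenteredGaussianVec P S X) {f : ℝ → ℝ}
    {M₁ M₂ : ℝ} (h1 : Differentiable ℝ f) (h2 : Differentiable ℝ (deriv f))
    (hM₁ : ∀ x, |deriv f x| ≤ M₁) (hM₂ : ∀ x, |deriv (deriv f) x| ≤ M₂) (h w vstar : Fin d → ℝ) :
    |(∫ ω, ((deriv f (w ⬝ᵥ X ω)) ^ 2 +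
          (f (w ⬝ᵥ X ω) - f (vstar ⬝ᵥ X ω)) * deriv (deriv f) (w ⬝ᵥ X ω)) *
          (h ⬝ᵥ X ω) ^ 2 ∂P) -
        (∫ ω, (deriv f (vstar ⬝ᵥ X ω)) ^ 2 * (h ⬝ᵥ X ω) ^ 2 ∂P)| ≤
      3 * M₁ * M₂ * (√3 * √(max ((w - vstar) ⬝ᵥ S *ᵥ (w - vstar)) 0) * max (h ⬝ᵥ S *ᵥ h) 0) := by
  have hY := hX.measurable_dotProduct
  have hF : AEStronglyMeasurable (fun ω => ((deriv f (w ⬝ᵥ X ω)) ^ 2 +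
      (f (w ⬝ᵥ X ω) - f (vstar ⬝ᵥ X ω)) * deriv (deriv f) (w ⬝ᵥ X ω)) * (h ⬝ᵥ X ω) ^ 2) P := by
    have := h1.continuous.measurable
    have := measurable_deriv f
    have := measurable_deriv (deriv f)
    fun_prop
  have hG : Integrable (fun ω => (deriv f (vstar ⬝ᵥ X ω)) ^ 2 * (h ⬝ᵥ X ω) ^ 2) P :=
    ((hX.integrable_pow_dotProduct h 2).const_mul (M₁ ^ 2)).mono'
      (by have := measurable_deriv f; fun_prop) (ae_of_all _ fun ω => by
        rw [norm_mul, norm_pow, norm_pow, Real.norm_eq_abs, Real.norm_eq_abs, sq_abs (h ⬝ᵥ X ω)]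
        exact mul_le_mul_of_nonneg_right (pow_le_pow_left₀ (abs_nonneg _) (hM₁ _) 2)
          (sq_nonneg _))
  have hpt : ∀ ω, |((deriv f (w ⬝ᵥ X ω)) ^ 2 +
      (f (w ⬝ᵥ X ω) - f (vstar ⬝ᵥ X ω)) * deriv (deriv f) (w ⬝ᵥ X ω)) * (h ⬝ᵥ X ω) ^ 2 -
      (deriv f (vstar ⬝ᵥ X ω)) ^ 2 * (h ⬝ᵥ X ω) ^ 2| ≤
      3 * M₁ * M₂ * (|(w - vstar) ⬝ᵥ X ω| * (h ⬝ᵥ X ω) ^ 2) := fun ω => by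
    rw [← sub_mul, abs_mul, abs_sq, sub_dotProduct, ← mul_assoc]
    exact mul_le_mul_of_nonneg_right (abs_hessian_sub_le h1 h2 hM₁ hM₂ _ _) (sq_nonneg _)
  have hM₁₂ : 0 ≤ 3 * M₁ * M₂ := by
    have := (abs_nonneg _).trans (hM₁ 0)
    have := (abs_nonneg _).trans (hM₂ 0)
    positivity
  calc _ ≤ ∫ ω, 3 * M₁ * M₂ * (|(w - vstar) ⬝ᵥ X ω| * (h ⬝ᵥ X ω) ^ 2) ∂P :=
        abs_integral_sub_le_integral_of_abs_sub_le hF hG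
          ((hX.integrable_abs_dotProduct_mul_sq _ h).const_mul _) hpt
    _ ≤ _ := by
        rw [integral_const_mul]
        exact mul_le_mul_of_nonneg_left (hX.integral_abs_dotProduct_mul_sq_le _ h) hM₁₂

end IsCenteredGaussianVec

theorem stmt11_general {Ω : Type*} [MeasurableSpace Ω] (P : Measure Ω)
    {d : ℕ} (lam : ℝ) (hlam : 0 ≤ lam)
    (v : Fin d → ℝ) (hv : v ⬝ᵥ v = 1)
    (S : Matrix (Fin d) (Fin d) ℝ) (hS : S = 1 + lam • vecMulVec v v)
    (X : Ω → Fin d → ℝ) (hX : IsCenteredGaussianVec P S X)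
    (f : ℝ → ℝ) (M₁ M₂ M₃ : ℝ)
    (h1 : Differentiable ℝ f) (h2 : Differentiable ℝ (deriv f))
    (hM₁ : ∀ x, |deriv f x| ≤ M₁) (hM₂ : ∀ x, |deriv (deriv f) x| ≤ M₂)
    (hM₃ : ∀ x, |deriv (deriv (deriv f)) x| ≤ M₃)
    (h w vstar : Fin d → ℝ) (hh : h ⬝ᵥ h = 1) :
    |(∫ ω, ((deriv f (w ⬝ᵥ X ω)) ^ 2 +
          (f (w ⬝ᵥ X ω) - f (vstar ⬝ᵥ X ω)) * deriv (deriv f) (w ⬝ᵥ X ω)) *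
          (h ⬝ᵥ X ω) ^ 2 ∂P) -
        (∫ ω, (deriv f (vstar ⬝ᵥ X ω)) ^ 2 * (h ⬝ᵥ X ω) ^ 2 ∂P)| ≤
      3 * Real.sqrt 3 * M₁ * M₂ * (1 + lam) ^ ((3 : ℝ) / 2) *
          Real.sqrt ((w - vstar) ⬝ᵥ (w - vstar)) +
        (3 / 2) * M₁ * M₃ * (1 + lam) ^ 2 * ((w - vstar) ⬝ᵥ (w - vstar)) := by
  subst hS
  have hM₁0 : 0 ≤ M₁ := (abs_nonneg _).trans (hM₁ 0)
  have hM₂0 : 0 ≤ M₂ := (abs_nonneg _).trans (hM₂ 0)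
  have hM₃0 : 0 ≤ M₃ := (abs_nonneg _).trans (hM₃ 0)
  have hvar : ∀ z, max (z ⬝ᵥ (1 + lam • vecMulVec v v) *ᵥ z) 0 ≤ (1 + lam) * (z ⬝ᵥ z) :=
    fun z => max_le (by simpa [hv] using dotProduct_spiked_mulVec_le hlam v z)
      (mul_nonneg (by linarith) (dotProduct_self_star_nonneg z))
  have hrpow : (1 + lam) ^ ((3 : ℝ) / 2) = (1 + lam) * √(1 + lam) := by
    rw [show (3 : ℝ) / 2 = 1 + 1 / 2 by norm_num, Real.rpow_add (by linarith), Real.rpow_one,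
      Real.sqrt_eq_rpow]
  calc _ ≤ 3 * M₁ * M₂ * (√3 * √((1 + lam) * ((w - vstar) ⬝ᵥ (w - vstar))) * (1 + lam)) := by
        refine (hX.abs_integral_hessian_sub_le h1 h2 hM₁ hM₂ h w vstar).trans ?_
        gcongr
        · exact hvar _
        · simpa [hh] using hvar h
    _ = 3 * √3 * M₁ * M₂ * (1 + lam) ^ ((3 : ℝ) / 2) * √((w - vstar) ⬝ᵥ (w - vstar)) := by
        rw [hrpow, Real.sqrt_mul (by linarith)]
        ring
    _ ≤ _ := le_add_of_nonneg_right
        (mul_nonneg (by positivity) (dotProduct_self_star_nonneg _))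

/-- Hessian spectral-deviation bound: with `H(z,z⋆) = f'(z)² + (f(z) − f(z⋆)) f''(z)` and
spiked Gaussian data `x ~ N(0, I + λvvᵀ)`, for unit vectors `h, w, v⋆`,
`|E[H(⟨w,x⟩,⟨v⋆,x⟩)⟨h,x⟩²] − E[f'(⟨v⋆,x⟩)²⟨h,x⟩²]|
  ≤ 3√3 M₁M₂ (1+λ)^{3/2} ‖w−v⋆‖ + (3/2) M₁M₃ (1+λ)² ‖w−v⋆‖²`. -/
theorem stmt11 {Ω : Type*} [MeasurableSpace Ω] (P : Measure Ω) [IsProbabilityMeasure P]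
    {d : ℕ} (lam : ℝ) (hlam : 0 ≤ lam)
    (v : Fin d → ℝ) (hv : v ⬝ᵥ v = 1)
    (S : Matrix (Fin d) (Fin d) ℝ) (hS : S = 1 + lam • vecMulVec v v)
    (X : Ω → Fin d → ℝ) (hX : IsCenteredGaussianVec P S X)
    (f : ℝ → ℝ) (M₁ M₂ M₃ : ℝ)
    (h1 : Differentiable ℝ f) (h2 : Differentiable ℝ (deriv f))
    (h3 : Differentiable ℝ (deriv (deriv f)))
    (hM₁ : ∀ x, |deriv f x| ≤ M₁) (hM₂ : ∀ x, |deriv (deriv f) x| ≤ M₂)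
    (hM₃ : ∀ x, |deriv (deriv (deriv f)) x| ≤ M₃)
    (h w vstar : Fin d → ℝ) (hh : h ⬝ᵥ h = 1) (hw : w ⬝ᵥ w = 1)
    (hvs : vstar ⬝ᵥ vstar = 1) :
    |(∫ ω, ((deriv f (w ⬝ᵥ X ω)) ^ 2 +
          (f (w ⬝ᵥ X ω) - f (vstar ⬝ᵥ X ω)) * deriv (deriv f) (w ⬝ᵥ X ω)) *
          (h ⬝ᵥ X ω) ^ 2 ∂P) -
        (∫ ω, (deriv f (vstar ⬝ᵥ X ω)) ^ 2 * (h ⬝ᵥ X ω) ^ 2 ∂P)| ≤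
      3 * Real.sqrt 3 * M₁ * M₂ * (1 + lam) ^ ((3 : ℝ) / 2) *
          Real.sqrt ((w - vstar) ⬝ᵥ (w - vstar)) +
        (3 / 2) * M₁ * M₃ * (1 + lam) ^ 2 * ((w - vstar) ⬝ᵥ (w - vstar)) :=
  stmt11_general P lam hlam v hv S hS X hX f M₁ M₂ M₃ h1 h2 hM₁ hM₂ hM₃ h w vstar hh
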